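/- arXiv:1909.07277 — 4 statements merged into one kernel-verified Lean document; each statement's English description precedes it below -/
import Mathlib

section
/- The Lehmer code Θ transforms the statistic des (number of descents) on S_n to the statistic asc (number of ascents) on inversion sequences: for every π ∈ S_n, des(π) = asc(Θ(π)). -/
def ascN (s : List ℕ) : ℕ :=
  ((Finset.range (s.length - 1)).filter fun i => s.getD i 0 < s.getD (i+1) 0).card

def repN (s : List ℕ) : ℕ := s.length - s.dedup.length

def zeroN (s : List ℕ) : ℕ :=
  ((Finset.range s.length).filter fun i => s.getD i 0 = 0).card

def maxN (s : List ℕ) : ℕ :=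
  ((Finset.range s.length).filter fun i => s.getD i 0 = i).card

def rminN (s : List ℕ) : ℕ :=
  ((Finset.range s.length).filter fun i =>
    ∀ j ∈ Finset.range s.length, i < j → s.getD i 0 < s.getD j 0).card

/-- `s` is an inversion sequence: 0-indexed, `s i ≤ i` (i.e. 1-indexed `0 ≤ s_i < i`). -/
def IsInvSeq (s : List ℕ) : Prop := ∀ i < s.length, s.getD i 0 ≤ i

/-- `s` is an ascent sequence. -/
def IsAscSeq (s : List ℕ) : Prop :=
  IsInvSeq s ∧ ∀ i < s.length, s.getD i 0 ≤ ascN (s.take i) + 1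

def AscSeqs (n : ℕ) : Set (List ℕ) := {s | IsAscSeq s ∧ s.length = n}

/-- The Lehmer code of a permutation of `Fin n`. -/
def lehmer {n : ℕ} (π : Equiv.Perm (Fin n)) : List ℕ :=
  List.ofFn fun i : Fin n => (Finset.univ.filter fun j : Fin n => j < i ∧ π i < π j).card

/-- The one-line word of a permutation, as a list of naturals. -/
def wordOf {n : ℕ} (π : Equiv.Perm (Fin n)) : List ℕ := List.ofFn fun i => (π i : ℕ)

def desN (l : List ℕ) : ℕ :=
  ((Finset.range (l.length - 1)).filter fun i => l.getD (i+1) 0 < l.getD i 0).card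

def lmaxN (l : List ℕ) : ℕ :=
  ((Finset.range l.length).filter fun i =>
    ∀ j ∈ Finset.range l.length, j < i → l.getD j 0 < l.getD i 0).card

def lminN (l : List ℕ) : ℕ :=
  ((Finset.range l.length).filter fun i =>
    ∀ j ∈ Finset.range l.length, j < i → l.getD i 0 < l.getD j 0).card

def rmaxN (l : List ℕ) : ℕ :=
  ((Finset.range l.length).filter fun i =>
    ∀ j ∈ Finset.range l.length, i < j → l.getD j 0 < l.getD i 0).card

open Finset in
/-- If `f b < f a`, then `b` counts `a` and everything `a` counts; otherwise `b` counts only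
indices that `a` also counts. -/
theorem card_filter_lt_lt_iff_of_covBy {ι α : Type*} [LinearOrder ι] [Fintype ι] [LinearOrder α]
    (f : ι → α) {a b : ι} (hab : a ⋖ b) :
    #{j | j < a ∧ f a < f j} < #{j | j < b ∧ f b < f j} ↔ f b < f a := by
  constructor
  · intro h
    by_contra! hle
    refine (card_le_card fun j hj => ?_).not_gt h
    simp only [mem_filter, mem_univ, true_and] at hj ⊢
    obtain ⟨hjb, hbj⟩ := hj
    obtain hja | rfl := (hab.le_of_lt hjb).lt_or_eq
    · exact ⟨hja, hle.trans_lt hbj⟩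
    · exact absurd hle hbj.not_ge
  · intro h
    refine card_lt_card <| (ssubset_iff_of_subset fun j hj => ?_).2 ⟨a, ?_, ?_⟩
    · simp only [mem_filter, mem_univ, true_and] at hj ⊢
      exact ⟨hj.1.trans hab.lt, h.trans hj.2⟩
    · simpa using ⟨hab.lt, h⟩
    · simp

/-- The Lehmer code sends the descent number of a permutation to the ascent number
of its inversion sequence. -/
theorem lehmer_des_eq_asc (n : ℕ) (π : Equiv.Perm (Fin n)) :
    desN (wordOf π) = ascN (lehmer π) := by
  unfold desN ascN wordOf lehmer
  simp only [List.length_ofFn]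
  refine congrArg Finset.card (Finset.filter_congr fun i hi => ?_)
  have hi : i + 1 < n := by rw [Finset.mem_range] at hi; omega
  simp only [List.getD_eq_getElem?_getD, List.length_ofFn, hi, Nat.lt_of_succ_lt hi,
    getElem?_pos, List.getElem_ofFn, Option.getD_some, Fin.val_fin_lt]
  have hcov : (⟨i, by omega⟩ : Fin n) ⋖ ⟨i + 1, hi⟩ := Fin.covBy_iff.2 (Order.covBy_add_one i)
  exact (card_filter_lt_lt_iff_of_covBy π hcov).symm
end

section
/- In any ascent sequence, all maximal entries appear in the initial strictly increasing run: if s is an ascent sequence of length n with max(s) = p, then s_i = i − 1 for all 1 ≤ i ≤ p, and s_i < i − 1 for all i > p. -/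
/-! If `s i = i`, the ascent bound `s i ≤ asc (s.take i) + 1` forces all `i - 1` adjacent pairs
of `s.take i` to be ascents, so `k ≤ s k` for `k < i`; with `s k ≤ k` this gives `s k = k`.
Hence the indices `i` with `s i = i` form an initial segment of `ℕ`, namely `range (maxN s)`. -/

open Finset

theorem Finset.eq_range_card_of_forall_le_mem {S : Finset ℕ}
    (hS : ∀ i ∈ S, ∀ j ≤ i, j ∈ S) : S = range #S := by
  have hsub : S ⊆ range #S := fun i hi => by
    have : range (i + 1) ⊆ S := fun j hj => hS i hi j (Nat.lt_succ_iff.1 (mem_range.1 hj))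
    simpa using card_le_card this
  exact eq_of_subset_of_card_le hsub (card_range _).le

theorem ascN_le_length_sub_one (t : List ℕ) : ascN t ≤ t.length - 1 :=
  (card_filter_le _ _).trans_eq (card_range _)

theorem le_getD_of_ascN_eq {t : List ℕ} (ht : ascN t = t.length - 1) :
    ∀ k < t.length, k ≤ t.getD k 0 := by
  have hasc : ∀ k ∈ range (t.length - 1), t.getD k 0 < t.getD (k + 1) 0 :=
    card_filter_eq_iff.1 ((card_range _).trans ht.symm).symm
  intro k hk
  induction k with
  | zero => exact Nat.zero_le _
  | succ k ih =>
    have := hasc k (mem_range.2 (by omega))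
    have := ih (by omega)
    omega

theorem IsAscSeq.getD_eq_of_le {s : List ℕ} (hs : IsAscSeq s) {i : ℕ} (hi : i < s.length)
    (hsi : s.getD i 0 = i) {j : ℕ} (hj : j ≤ i) : s.getD j 0 = j := by
  rcases hj.eq_or_lt with rfl | hji
  · exact hsi
  have hlen : (s.take i).length = i := List.length_take_of_le hi.le
  have hasc : ascN (s.take i) = (s.take i).length - 1 := by
    have := hs.2 i hi
    have := ascN_le_length_sub_one (s.take i)
    omega
  have hle := le_getD_of_ascN_eq hasc j (by omega)
  rw [List.getD_eq_getElem?_getD, List.getElem?_take_of_lt hji,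
    ← List.getD_eq_getElem?_getD] at hle
  have := hs.1 j (by omega)
  omega

/-- All maximal entries of an ascent sequence appear in the initial strictly
increasing run: if `max s = p` then (0-indexed) `s i = i` for `i < p` and
`s i < i` for `p ≤ i < n`. -/
theorem maximals_in_initial_run (n p : ℕ) (s : List ℕ)
    (hs : IsAscSeq s) (hl : s.length = n) (hp : maxN s = p) :
    (∀ i < p, s.getD i 0 = i) ∧ (∀ i, p ≤ i → i < n → s.getD i 0 < i) := by
  subst hl hp
  have hfix : (range s.length).filter (fun i => s.getD i 0 = i) = range (maxN s) :=
    eq_range_card_of_forall_le_mem fun i hi j hj => by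
      rw [mem_filter, mem_range] at hi ⊢
      exact ⟨by omega, hs.getD_eq_of_le hi.1 hi.2 hj⟩
  have mem_fix : ∀ i, i < maxN s ↔ i < s.length ∧ s.getD i 0 = i := fun i => by
    rw [← mem_range, ← hfix, mem_filter, mem_range]
  refine ⟨fun i hi => ((mem_fix i).1 hi).2, fun i hpi hin => ?_⟩
  have hne : s.getD i 0 ≠ i := fun h => absurd ((mem_fix i).2 ⟨hin, h⟩) (by omega)
  have := hs.1 i hin
  omega
end

section
/- Define B_n as the set of inversion sequences b of length n satisfying: (a) if b_i ≥ b_{i+1} and b_i = i−1, then b_j < j−1 for all j > i; (b) if b_i ≥ b_{i+1} and b_i < i−1, then the value i−1 does not occur among b_{i+1},...,b_n. Then |B_n| equals the number of ascent sequences of length n. -/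
/-- Membership in `B_n` (0-indexed): an inversion sequence `b` such that whenever
`b k ≥ b (k+1)`: (a) if `b k = k` then `b m < m` for all `m > k`; (b) if `b k < k`
then the value `k` does not occur after position `k`. -/
def IsB (b : List ℕ) : Prop :=
  IsInvSeq b ∧ ∀ k, k + 1 < b.length → b.getD (k+1) 0 ≤ b.getD k 0 →
    (b.getD k 0 = k → ∀ m, k < m → m < b.length → b.getD m 0 < m) ∧
    (b.getD k 0 < k → ∀ m, k < m → m < b.length → b.getD m 0 ≠ k)


/-!
A sequence `b ++ [x]` lies in `B` exactly when `b` does and `x` belongs to a set `A(b) ⊆ [0, n]`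
(`n = |b|`) read off from `b`: every weak descent `b k ≥ b (k+1)` with `b k < k` forbids the value
`k`, and a weak descent with `b k = k` forbids `n`. Condition (a) allows at most one descent of the
second kind, and the positions `k < n - 1` split into ascents and the two kinds of weak descents,
so `|A(b)| = asc(b) + 2`, the number of values allowed after an ascent sequence with `asc(b)`
ascents.

Encoding every entry of `b` by its rank among the values admissible at its position is therefore a
bijection onto ascent sequences, provided it preserves ascents. It does, because appending `x`
changes no admissible value below `x`, so the rank of `x` is the same in `A(b)` and in
`A(b ++ [x])`: consecutive entries are compared inside the same set.
-/

open Finset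

theorem List.getD_concat {α : Type*} (l : List α) (x d : α) (i : ℕ) :
    (l ++ [x]).getD i d = if i < l.length then l.getD i d else if i = l.length then x else d := by
  split_ifs with h₁ h₂
  · exact List.getD_append _ _ _ _ h₁
  · subst h₂; simp
  · exact List.getD_eq_default _ _ (by rw [List.length_append, List.length_singleton]; omega)

theorem isInvSeq_concat_iff (s : List ℕ) (y : ℕ) :
    IsInvSeq (s ++ [y]) ↔ IsInvSeq s ∧ y ≤ s.length := by
  simp only [IsInvSeq, List.length_append, List.length_singleton, Nat.lt_succ_iff_lt_or_eq,
    or_imp, forall_and, forall_eq, List.getD_concat, lt_irrefl, if_false, if_true]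
  exact and_congr_left' (forall₂_congr fun i hi => by simp [hi])

theorem ascN_concat_concat (l : List ℕ) (y z : ℕ) :
    ascN (l ++ [y] ++ [z]) = ascN (l ++ [y]) + if y < z then 1 else 0 := by
  have hold : ∀ i < l.length + 1, (l ++ [y] ++ [z]).getD i 0 = (l ++ [y]).getD i 0 :=
    fun i hi => List.getD_append _ _ _ _ (by simpa using hi)
  have hy : (l ++ [y]).getD l.length 0 = y := by simp
  have hz : (l ++ [y] ++ [z]).getD (l.length + 1) 0 = z := by simp
  simp only [ascN, List.length_append, List.length_singleton, Nat.add_sub_cancel,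
    range_add_one, filter_insert, hold _ (Nat.lt_succ_self _), hy, hz]
  rw [filter_congr fun i hi => by
    rw [hold i (by grind), hold (i + 1) (by grind)]]
  split_ifs
  · exact card_insert_of_notMem (by simp)
  · rfl

theorem ascN_lt_length {s : List ℕ} (hs : s ≠ []) : ascN s < s.length := by
  have := List.length_pos_iff.2 hs
  refine (card_filter_le _ _).trans_lt ?_
  rw [card_range]
  omega

theorem isAscSeq_concat_iff {s : List ℕ} (hs : s ≠ []) (y : ℕ) :
    IsAscSeq (s ++ [y]) ↔ IsAscSeq s ∧ y ≤ ascN s + 1 := by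
  have hprefix : (∀ i < s.length, (s ++ [y]).getD i 0 ≤ ascN ((s ++ [y]).take i) + 1) ↔
      ∀ i < s.length, s.getD i 0 ≤ ascN (s.take i) + 1 := forall₂_congr fun i hi => by
    rw [List.getD_append _ _ _ _ hi, List.take_append_of_le_length hi.le]
  have hlast : (s ++ [y]).getD s.length 0 ≤ ascN ((s ++ [y]).take s.length) + 1 ↔
      y ≤ ascN s + 1 := by simp
  simp only [IsAscSeq, isInvSeq_concat_iff, List.length_append, List.length_singleton,
    Nat.lt_succ_iff_lt_or_eq, or_imp, forall_and, forall_eq, hprefix, hlast]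
  have := ascN_lt_length hs
  constructor
  · exact fun ⟨⟨hinv, _⟩, hasc, hy⟩ => ⟨⟨hinv, hasc⟩, hy⟩
  · exact fun ⟨⟨hinv, hasc⟩, hy⟩ => ⟨⟨hinv, by omega⟩, hasc, hy⟩

theorem isAscSeq_singleton_iff (y : ℕ) : IsAscSeq [y] ↔ y = 0 := by
  refine ⟨fun h => Nat.le_zero.1 (h.1 0 Nat.zero_lt_one), ?_⟩
  rintro rfl
  constructor <;> intro i hi <;> obtain rfl := Nat.lt_one_iff.1 hi <;> simp

def rankIn (V : Finset ℕ) (x : ℕ) : ℕ := #(V.filter (· < x))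

theorem rankIn_strictMonoOn (V : Finset ℕ) : StrictMonoOn (rankIn V) V := by
  intro x hx y _ hxy
  refine card_lt_card ((ssubset_iff_of_subset fun z hz => ?_).2 ⟨x, ?_, ?_⟩)
  · exact mem_filter.2 ⟨(mem_filter.1 hz).1, (mem_filter.1 hz).2.trans hxy⟩
  · exact mem_filter.2 ⟨hx, hxy⟩
  · simp

theorem rankIn_lt_card {V : Finset ℕ} {x : ℕ} (hx : x ∈ V) : rankIn V x < #V :=
  card_lt_card <| filter_ssubset.2 ⟨x, hx, lt_irrefl x⟩

theorem exists_rankIn_eq {V : Finset ℕ} {r : ℕ} (hr : r < #V) : ∃ x ∈ V, rankIn V x = r := by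
  have himage : V.image (rankIn V) = range #V := by
    refine eq_of_subset_of_card_le (fun r hr => ?_) ?_
    · obtain ⟨x, hx, rfl⟩ := mem_image.1 hr
      exact mem_range.2 (rankIn_lt_card hx)
    · rw [card_range, card_image_of_injOn (rankIn_strictMonoOn V).injOn]
  exact mem_image.1 (himage ▸ mem_range.2 hr)

def admissibleNext (b : List ℕ) : Finset ℕ :=
  (range (b.length + 1)).filter fun x => ∀ k < b.length - 1, b.getD (k+1) 0 ≤ b.getD k 0 →
    (b.getD k 0 = k → x ≠ b.length) ∧ (b.getD k 0 < k → x ≠ k)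

theorem admissibleNext_nil : admissibleNext [] = {0} := rfl

theorem le_length_of_mem_admissibleNext {b : List ℕ} {x : ℕ} (hx : x ∈ admissibleNext b) :
    x ≤ b.length :=
  mem_range_succ_iff.1 (mem_filter.1 hx).1

theorem isB_nil : IsB [] :=
  ⟨fun _ h => absurd h (Nat.not_lt_zero _), fun _ h => absurd h (Nat.not_lt_zero _)⟩

theorem isB_concat_iff (b : List ℕ) (x : ℕ) : IsB (b ++ [x]) ↔ IsB b ∧ x ∈ admissibleNext b := by
  set n := b.length
  have hold : ∀ i < n, (b ++ [x]).getD i 0 = b.getD i 0 := fun i hi => List.getD_append _ _ _ _ hi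
  have hnew : (b ++ [x]).getD n 0 = x := by simp [n]
  have hlen : (b ++ [x]).length = n + 1 := by simp [n]
  simp only [IsB, admissibleNext, isInvSeq_concat_iff, mem_filter, mem_range, Nat.lt_succ_iff,
    hlen]
  constructor
  · rintro ⟨⟨hinv, hx⟩, hc⟩
    have hc' : ∀ k, k + 1 < n → b.getD (k + 1) 0 ≤ b.getD k 0 →
        (b.getD k 0 = k → ∀ m, k < m → m ≤ n → (b ++ [x]).getD m 0 < m) ∧
        (b.getD k 0 < k → ∀ m, k < m → m ≤ n → (b ++ [x]).getD m 0 ≠ k) := by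
      intro k hk hd
      have := hc k (by omega) (by rwa [hold k (by omega), hold (k + 1) hk])
      rwa [hold k (by omega)] at this
    refine ⟨⟨hinv, fun k hk hd => ?_⟩, hx, fun k hk hd => ?_⟩
    · obtain ⟨ha, hb⟩ := hc' k hk hd
      exact ⟨fun h m hkm hm => hold m hm ▸ ha h m hkm hm.le,
        fun h m hkm hm => hold m hm ▸ hb h m hkm hm.le⟩
    · obtain ⟨ha, hb⟩ := hc' k (by omega) hd
      exact ⟨fun h => (hnew ▸ ha h n (by omega) le_rfl).ne,
        fun h => hnew ▸ hb h n (by omega) le_rfl⟩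
  · rintro ⟨⟨hinv, hb⟩, hx, hadm⟩
    refine ⟨⟨hinv, hx⟩, fun k hk hd => ?_⟩
    rw [hold k (by omega)] at hd ⊢
    rcases Nat.lt_or_ge (k + 1) n with hk' | hk'
    · rw [hold (k + 1) hk'] at hd
      obtain ⟨ha₁, hb₁⟩ := hb k hk' hd
      obtain ⟨ha₂, hb₂⟩ := hadm k (by omega) hd
      refine ⟨fun h m hkm hm => ?_, fun h m hkm hm => ?_⟩ <;>
        rcases hm.lt_or_eq with hm | rfl
      · exact hold m hm ▸ ha₁ h m hkm hm
      · rw [hnew]; exact lt_of_le_of_ne hx (ha₂ h)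
      · exact hold m hm ▸ hb₁ h m hkm hm
      · rw [hnew]; exact hb₂ h
    · -- a weak descent at the new pair forces `x ≤ b (n - 1) ≤ n - 1`, which satisfies (a) and (b)
      have hkn : k + 1 = n := by omega
      rw [hkn, hnew] at hd
      refine ⟨fun h m hkm hm => ?_, fun h m hkm hm => ?_⟩ <;>
        rw [show m = n by omega, hnew] <;> omega

theorem IsB.mem_admissibleNext_concat_self {b : List ℕ} {x : ℕ} (hb : IsB (b ++ [x])) :
    x ∈ admissibleNext (b ++ [x]) := by
  have hnew : (b ++ [x]).getD b.length 0 = x := by simp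
  have hlen : (b ++ [x]).length = b.length + 1 := by simp
  have hx : x ≤ b.length := hnew ▸ hb.1 b.length (by omega)
  simp only [admissibleNext, mem_filter, mem_range, hlen, Nat.add_sub_cancel]
  refine ⟨by omega, fun k hk hd => ⟨fun _ => by omega, fun hlt => ?_⟩⟩
  exact hnew ▸ (hb.2 k (by omega) hd).2 hlt b.length hk (by omega)

theorem mem_admissibleNext_concat_iff {b : List ℕ} {x y : ℕ} (hx : x ≤ b.length) (hy : y < x) :
    y ∈ admissibleNext (b ++ [x]) ↔ y ∈ admissibleNext b := by
  set n := b.length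
  have hold : ∀ i < n, (b ++ [x]).getD i 0 = b.getD i 0 := fun i hi => List.getD_append _ _ _ _ hi
  have hnew : (b ++ [x]).getD n 0 = x := by simp [n]
  simp only [admissibleNext, mem_filter, mem_range, List.length_append, List.length_singleton,
    Nat.add_sub_cancel]
  constructor
  · rintro ⟨-, h⟩
    refine ⟨by omega, fun k hk hd => ⟨fun _ => by omega, fun hlt => ?_⟩⟩
    have := h k (by omega)
    rw [hold k (by omega), hold (k + 1) (by omega)] at this
    exact (this hd).2 hlt
  · rintro ⟨-, h⟩
    refine ⟨by omega, fun k hk hd => ⟨fun _ => by omega, fun hlt => ?_⟩⟩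
    rw [hold k (by omega)] at hd hlt
    rcases Nat.lt_or_ge (k + 1) n with hk' | hk'
    · rw [hold (k + 1) hk'] at hd
      exact (h k (by omega) hd).2 hlt
    · rw [show k + 1 = n by omega, hnew] at hd
      omega

theorem rankIn_admissibleNext_concat {b : List ℕ} {x : ℕ} (hx : x ≤ b.length) :
    rankIn (admissibleNext (b ++ [x])) x = rankIn (admissibleNext b) x := by
  unfold rankIn
  congr 1
  ext y
  simp only [mem_filter]
  exact and_congr_left (mem_admissibleNext_concat_iff hx)

def lowDescents (b : List ℕ) : Finset ℕ :=
  (range (b.length - 1)).filter fun k => b.getD (k+1) 0 ≤ b.getD k 0 ∧ b.getD k 0 < k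

def topDescents (b : List ℕ) : Finset ℕ :=
  (range (b.length - 1)).filter fun k => b.getD (k+1) 0 ≤ b.getD k 0 ∧ b.getD k 0 = k

theorem ascN_add_card_lowDescents_add_card_topDescents {b : List ℕ} (hb : IsInvSeq b) :
    ascN b + #(lowDescents b) + #(topDescents b) = b.length - 1 := by
  set D := (range (b.length - 1)).filter fun k => ¬ b.getD k 0 < b.getD (k+1) 0
  have hlow : lowDescents b = D.filter fun k => b.getD k 0 < k := by
    simp only [lowDescents, D, filter_filter, not_lt]
  have htop : topDescents b = D.filter fun k => ¬ b.getD k 0 < k := by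
    simp only [topDescents, D, filter_filter, not_lt]
    refine filter_congr fun k hk => and_congr_right fun _ => ?_
    have := hb k (by grind)
    omega
  rw [add_assoc, hlow, htop, card_filter_add_card_filter_not, ascN,
    card_filter_add_card_filter_not, card_range]

theorem IsB.card_topDescents_le_one {b : List ℕ} (hb : IsB b) : #(topDescents b) ≤ 1 := by
  suffices ∀ k ∈ topDescents b, ∀ l ∈ topDescents b, ¬ k < l from
    card_le_one.2 fun k hk l hl => (not_lt.1 (this l hl k hk)).antisymm (not_lt.1 (this k hk l hl))
  simp only [topDescents, mem_filter, mem_range]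
  intro k ⟨hk, hdk, htk⟩ l ⟨hl, _, htl⟩ hkl
  have := (hb.2 k (by omega) hdk).1 htk l hkl (by omega)
  omega

-- `(topDescents b).image fun _ => b.length` is `{b.length}` or `∅`
theorem admissibleNext_eq_sdiff (b : List ℕ) :
    admissibleNext b =
      range (b.length + 1) \ (lowDescents b ∪ (topDescents b).image fun _ => b.length) := by
  ext x
  simp only [admissibleNext, lowDescents, topDescents, mem_filter, mem_sdiff, mem_union, mem_image,
    mem_range]
  refine and_congr_right fun _ => ⟨fun h => ?_, fun h k hk hd => ?_⟩
  · rintro (⟨hx, hd, hlt⟩ | ⟨k, ⟨hk, hd, heq⟩, rfl⟩)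
    · exact (h x hx hd).2 hlt rfl
    · exact (h k hk hd).1 heq rfl
  · exact ⟨fun heq hx => h (Or.inr ⟨k, ⟨hk, hd, heq⟩, hx.symm⟩),
      fun hlt hx => h (Or.inl (hx ▸ ⟨hk, hd, hlt⟩))⟩

theorem IsB.card_admissibleNext {b : List ℕ} (hb : IsB b) (hne : b ≠ []) :
    #(admissibleNext b) = ascN b + 2 := by
  have hlen := List.length_pos_iff.2 hne
  have hsub : lowDescents b ∪ (topDescents b).image (fun _ => b.length) ⊆
      range (b.length + 1) := by
    intro x
    simp only [lowDescents, mem_union, mem_filter, mem_image, mem_range]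
    omega
  have hdisj : Disjoint (lowDescents b) ((topDescents b).image fun _ => b.length) := by
    simp only [disjoint_right, lowDescents, mem_image, mem_filter, mem_range]
    omega
  have htop : #((topDescents b).image fun _ => b.length) = #(topDescents b) :=
    card_image_of_injOn fun k hk l hl _ => card_le_one.1 hb.card_topDescents_le_one k hk l hl
  have := ascN_add_card_lowDescents_add_card_topDescents hb.1
  rw [admissibleNext_eq_sdiff, card_sdiff_of_subset hsub, card_union_of_disjoint hdisj, htop,
    card_range]
  omega

def toAscent (b : List ℕ) : List ℕ := b.mapIdx fun i x => rankIn (admissibleNext (b.take i)) x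

@[simp] theorem length_toAscent (b : List ℕ) : (toAscent b).length = b.length :=
  List.length_mapIdx

theorem toAscent_concat (b : List ℕ) (x : ℕ) :
    toAscent (b ++ [x]) = toAscent b ++ [rankIn (admissibleNext b) x] := by
  rw [toAscent, List.mapIdx_concat, List.take_append_of_le_length le_rfl, List.take_length]
  congr 1
  exact List.mapIdx_eq_mapIdx_iff.2 fun i hi => by rw [List.take_append_of_le_length hi.le]

theorem ascN_toAscent {b : List ℕ} (hb : IsB b) : ascN (toAscent b) = ascN b := by
  induction b using List.reverseRecOn with
  | nil => rfl
  | append_singleton c x ih =>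
    obtain ⟨hc, hx⟩ := (isB_concat_iff c x).1 hb
    rcases List.eq_nil_or_concat c with rfl | ⟨d, y, rfl⟩
    · rfl
    rw [List.concat_eq_append] at *
    have hlast : toAscent (d ++ [y]) = toAscent d ++ [rankIn (admissibleNext (d ++ [y])) y] := by
      rw [toAscent_concat, rankIn_admissibleNext_concat
        (le_length_of_mem_admissibleNext ((isB_concat_iff d y).1 hc).2)]
    rw [toAscent_concat, hlast, ascN_concat_concat, ← hlast, ih hc, ascN_concat_concat]
    simp only [(rankIn_strictMonoOn _).lt_iff_lt hc.mem_admissibleNext_concat_self hx]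

theorem isAscSeq_toAscent {b : List ℕ} (hb : IsB b) : IsAscSeq (toAscent b) := by
  induction b using List.reverseRecOn with
  | nil => exact ⟨fun _ h => absurd h (Nat.not_lt_zero _), fun _ h => absurd h (Nat.not_lt_zero _)⟩
  | append_singleton c x ih =>
    obtain ⟨hc, hx⟩ := (isB_concat_iff c x).1 hb
    have hrank := rankIn_lt_card hx
    rw [toAscent_concat]
    rcases eq_or_ne c [] with rfl | hne
    · rw [admissibleNext_nil, card_singleton, Nat.lt_one_iff] at hrank
      exact (isAscSeq_singleton_iff _).2 hrank
    · rw [hc.card_admissibleNext hne, ← ascN_toAscent hc] at hrank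
      exact (isAscSeq_concat_iff (by simpa [toAscent] using hne) _).2 ⟨ih hc, by omega⟩

theorem toAscent_injOn : Set.InjOn toAscent {b | IsB b} := by
  intro b hb b' hb' h
  induction b using List.reverseRecOn generalizing b' with
  | nil => simpa [eq_comm] using congrArg List.length h
  | append_singleton c x ih =>
    obtain ⟨c', x', rfl⟩ : ∃ c' x', b' = c' ++ [x'] := by
      rcases List.eq_nil_or_concat b' with rfl | ⟨c', x', rfl⟩
      · simpa using congrArg List.length h
      · exact ⟨c', x', List.concat_eq_append⟩
    obtain ⟨hc, hx⟩ := (isB_concat_iff c x).1 hb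
    obtain ⟨hc', hx'⟩ := (isB_concat_iff c' x').1 hb'
    rw [toAscent_concat, toAscent_concat, List.append_singleton_inj] at h
    obtain rfl := ih hc hc' h.1
    rw [(rankIn_strictMonoOn _).injOn hx hx' h.2]

theorem exists_toAscent_eq {s : List ℕ} (hs : IsAscSeq s) : ∃ b, IsB b ∧ toAscent b = s := by
  induction s using List.reverseRecOn with
  | nil => exact ⟨[], isB_nil, rfl⟩
  | append_singleton t y ih =>
    rcases eq_or_ne t [] with rfl | hne
    · obtain rfl := (isAscSeq_singleton_iff y).1 hs
      exact ⟨[0], (isB_concat_iff [] 0).2 ⟨isB_nil, by simp [admissibleNext_nil]⟩, rfl⟩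
    obtain ⟨ht, hy⟩ := (isAscSeq_concat_iff hne y).1 hs
    obtain ⟨c, hc, rfl⟩ := ih ht
    have hcne : c ≠ [] := by rintro rfl; exact hne rfl
    obtain ⟨x, hx, rfl⟩ := exists_rankIn_eq (V := admissibleNext c) (r := y)
      (by rw [hc.card_admissibleNext hcne, ← ascN_toAscent hc]; omega)
    exact ⟨c ++ [x], (isB_concat_iff c x).2 ⟨hc, hx⟩, toAscent_concat c x⟩

/-- `|B_n|` equals the number of ascent sequences of length `n`. -/
theorem B_card_eq_ascent_card (n : ℕ) :
    {b : List ℕ | IsB b ∧ b.length = n}.ncard = (AscSeqs n).ncard := by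
  have himage : toAscent '' {b : List ℕ | IsB b ∧ b.length = n} = AscSeqs n := by
    ext s
    constructor
    · rintro ⟨b, ⟨hb, rfl⟩, rfl⟩
      exact ⟨isAscSeq_toAscent hb, length_toAscent b⟩
    · rintro ⟨hs, rfl⟩
      obtain ⟨b, hb, rfl⟩ := exists_toAscent_eq hs
      exact ⟨b, ⟨hb, (length_toAscent b).symm⟩, rfl⟩
  rw [← himage, (toAscent_injOn.mono fun _ hb => hb.1).ncard_image]
end

section
/- Define C_n as the set of inversion sequences c of length n such that whenever c_i ≥ c_{i+1}, the value i does not occur among c_{i+1},...,c_n. Then there is a bijection γ from C_n to the set A_n of ascent sequences of length n preserving the four set-valued statistics ASC (positions of ascents), DIST (positions of last occurrences of distinct positive entries), ZERO (positions of zeros) and RMIN (positions of right-to-left minima). In particular, |C_n| equals the number of ascent sequences of length n. -/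
/-- Membership in `C_n` (0-indexed): an inversion sequence `c` such that whenever
`c k ≥ c (k+1)`, the value `k+1` does not occur among the later entries. -/
def IsC (c : List ℕ) : Prop :=
  IsInvSeq c ∧ ∀ k, k + 1 < c.length → c.getD (k+1) 0 ≤ c.getD k 0 →
    ∀ m, k < m → m < c.length → c.getD m 0 ≠ k + 1

/-- Positions (0-indexed) of ascents. -/
def ASCset (s : List ℕ) : Finset ℕ :=
  (Finset.range (s.length - 1)).filter fun i => s.getD i 0 < s.getD (i+1) 0

/-- Positions (0-indexed) of last occurrences of distinct positive entries. -/
def DISTset (s : List ℕ) : Finset ℕ :=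
  (Finset.range s.length).filter fun i =>
    1 ≤ i ∧ s.getD i 0 ≠ 0 ∧ ∀ j ∈ Finset.range s.length, i < j → s.getD i 0 ≠ s.getD j 0

/-- Positions (0-indexed) of zeros. -/
def ZEROset (s : List ℕ) : Finset ℕ :=
  (Finset.range s.length).filter fun i => s.getD i 0 = 0

/-- Positions (0-indexed) of right-to-left minima. -/
def RMINset (s : List ℕ) : Finset ℕ :=
  (Finset.range s.length).filter fun i =>
    ∀ j ∈ Finset.range s.length, i < j → s.getD i 0 < s.getD j 0

/-!
Call `y` an ascent top of `c` if `y = 0` or `c (y-1) < c y`, and let `rank c x` count the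
ascent tops below `x`. The condition defining `C_n` says exactly that every entry of `c` is an
ascent top, so `rank c` is strictly increasing on the entries of `c`, and `γ c = map (rank c) c`
has the same relative order and the same zeros as `c`; this gives the four statistics.

For the bijection, grow `c` one entry at a time: `c ++ [y] ∈ C` iff `y ≤ |c|` and `y` is `|c|`
or an ascent top of `c`, and then `γ (c ++ [y]) = γ c ++ [rank c y]`. On these admissible `y`,
`rank c` is strictly increasing with image `{0, …, rank c |c|}`, and `rank c |c| = asc c + 1`
is the bound allowed for the next entry of the ascent sequence `γ c`.
-/

open Finset

lemma List.getD_mem_of_lt {s : List ℕ} {i : ℕ} (hi : i < s.length) : s.getD i 0 ∈ s := by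
  rw [List.getD_eq_getElem _ _ hi]
  exact List.getElem_mem hi

lemma List.getD_map_of_lt {s : List ℕ} {f : ℕ → ℕ} {i : ℕ} (hi : i < s.length) :
    (s.map f).getD i 0 = f (s.getD i 0) := by
  rw [List.getD_eq_getElem _ _ (by simpa using hi), List.getD_eq_getElem _ _ hi, List.getElem_map]

section Relabel

variable {s : List ℕ} {f : ℕ → ℕ}

lemma getD_map_lt_getD_map_iff (hf : StrictMonoOn f {x | x ∈ s}) {i j : ℕ}
    (hi : i < s.length) (hj : j < s.length) :
    (s.map f).getD i 0 < (s.map f).getD j 0 ↔ s.getD i 0 < s.getD j 0 := by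
  rw [List.getD_map_of_lt hi, List.getD_map_of_lt hj]
  exact hf.lt_iff_lt (List.getD_mem_of_lt hi) (List.getD_mem_of_lt hj)

lemma getD_map_eq_getD_map_iff (hf : StrictMonoOn f {x | x ∈ s}) {i j : ℕ}
    (hi : i < s.length) (hj : j < s.length) :
    (s.map f).getD i 0 = (s.map f).getD j 0 ↔ s.getD i 0 = s.getD j 0 := by
  rw [List.getD_map_of_lt hi, List.getD_map_of_lt hj]
  exact hf.injOn.eq_iff (List.getD_mem_of_lt hi) (List.getD_mem_of_lt hj)

lemma ASCset_map (hf : StrictMonoOn f {x | x ∈ s}) : ASCset (s.map f) = ASCset s := by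
  unfold ASCset
  rw [List.length_map]
  refine filter_congr fun i hi => ?_
  rw [mem_range] at hi
  exact getD_map_lt_getD_map_iff hf (by omega) (by omega)

lemma ascN_map (hf : StrictMonoOn f {x | x ∈ s}) : ascN (s.map f) = ascN s :=
  congrArg card (ASCset_map hf)

lemma RMINset_map (hf : StrictMonoOn f {x | x ∈ s}) : RMINset (s.map f) = RMINset s := by
  unfold RMINset
  rw [List.length_map]
  refine filter_congr fun i hi => forall₂_congr fun j hj => ?_
  rw [mem_range] at hi hj
  rw [getD_map_lt_getD_map_iff hf hi hj]

lemma ZEROset_map (hf0 : ∀ x ∈ s, f x = 0 ↔ x = 0) : ZEROset (s.map f) = ZEROset s := by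
  unfold ZEROset
  rw [List.length_map]
  refine filter_congr fun i hi => ?_
  rw [mem_range] at hi
  rw [List.getD_map_of_lt hi, hf0 _ (List.getD_mem_of_lt hi)]

lemma DISTset_map (hf : StrictMonoOn f {x | x ∈ s}) (hf0 : ∀ x ∈ s, f x = 0 ↔ x = 0) :
    DISTset (s.map f) = DISTset s := by
  unfold DISTset
  rw [List.length_map]
  refine filter_congr fun i hi => and_congr_right' (and_congr ?_ (forall₂_congr fun j hj => ?_))
  · rw [mem_range] at hi
    rw [List.getD_map_of_lt hi, ne_eq, hf0 _ (List.getD_mem_of_lt hi)]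
  · rw [mem_range] at hi hj
    rw [ne_eq, getD_map_eq_getD_map_iff hf hi hj]

end Relabel

lemma isInvSeq_append_singleton_iff {p : List ℕ} {y : ℕ} :
    IsInvSeq (p ++ [y]) ↔ IsInvSeq p ∧ y ≤ p.length := by
  unfold IsInvSeq
  rw [List.length_append, List.length_singleton, Nat.forall_lt_succ_right,
    List.getD_append_right _ _ _ _ le_rfl, Nat.sub_self]
  refine and_congr (forall₂_congr fun i hi => ?_) Iff.rfl
  rw [List.getD_append _ _ _ _ hi]

lemma isAscSeq_append_singleton_iff {b : List ℕ} {x : ℕ} :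
    IsAscSeq (b ++ [x]) ↔ IsAscSeq b ∧ x ≤ b.length ∧ x ≤ ascN b + 1 := by
  unfold IsAscSeq
  rw [isInvSeq_append_singleton_iff, List.length_append, List.length_singleton,
    Nat.forall_lt_succ_right, List.getD_append_right _ _ _ _ le_rfl, Nat.sub_self,
    List.take_append_of_le_length le_rfl, List.take_length]
  have hpre : (∀ i < b.length, (b ++ [x]).getD i 0 ≤ ascN ((b ++ [x]).take i) + 1) ↔
      ∀ i < b.length, b.getD i 0 ≤ ascN (b.take i) + 1 := forall₂_congr fun i hi => by
    rw [List.getD_append _ _ _ _ hi, List.take_append_of_le_length hi.le]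
  rw [hpre]
  simp only [List.getD_cons_zero]
  tauto

lemma IsInvSeq.lt_length_of_mem {c : List ℕ} (hc : IsInvSeq c) {x : ℕ} (hx : x ∈ c) :
    x < c.length := by
  obtain ⟨i, hi, rfl⟩ := List.mem_iff_getElem.1 hx
  have := hc i hi
  rw [List.getD_eq_getElem _ _ hi] at this
  omega

namespace InvSeq

def IsAscTop (c : List ℕ) (y : ℕ) : Prop := y = 0 ∨ c.getD (y - 1) 0 < c.getD y 0

instance (c : List ℕ) : DecidablePred (IsAscTop c) := fun _ => by
  unfold IsAscTop; infer_instance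

def rank (c : List ℕ) (x : ℕ) : ℕ := ((range x).filter (IsAscTop c)).card

def gamma (c : List ℕ) : List ℕ := c.map (rank c)

section Rank

variable {c : List ℕ}

lemma rank_zero : rank c 0 = 0 := rfl

lemma rank_succ (y : ℕ) : rank c (y + 1) = rank c y + if IsAscTop c y then 1 else 0 := by
  unfold rank
  rw [range_add_one, filter_insert]
  split_ifs <;> simp [card_insert_of_notMem]

lemma rank_le_self (x : ℕ) : rank c x ≤ x :=
  (card_filter_le _ _).trans (card_range x).le

lemma rank_mono : Monotone (rank c) :=
  monotone_nat_of_le_succ fun y => by rw [rank_succ]; omega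

lemma rank_lt_rank {y x : ℕ} (hy : IsAscTop c y) (hyx : y < x) : rank c y < rank c x :=
  calc rank c y < rank c (y + 1) := by rw [rank_succ, if_pos hy]; omega
    _ ≤ rank c x := rank_mono hyx

lemma rank_eq_zero_iff {x : ℕ} : rank c x = 0 ↔ x = 0 := by
  refine ⟨fun h => ?_, fun h => by rw [h, rank_zero]⟩
  by_contra hx
  have := rank_lt_rank (c := c) (Or.inl rfl) (Nat.pos_of_ne_zero hx)
  omega

lemma isAscTop_append_iff {p q : List ℕ} {y : ℕ} (hy : y < p.length) :
    IsAscTop (p ++ q) y ↔ IsAscTop p y := by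
  unfold IsAscTop
  rw [List.getD_append _ _ _ _ hy, List.getD_append _ _ _ _ (by omega)]

lemma rank_append {p q : List ℕ} {x : ℕ} (hx : x ≤ p.length) :
    rank (p ++ q) x = rank p x := by
  unfold rank
  congr 1
  refine filter_congr fun y hy => isAscTop_append_iff ?_
  rw [mem_range] at hy
  omega

lemma rank_length (hc : c ≠ []) : rank c c.length = ascN c + 1 := by
  have hset : (range c.length).filter (IsAscTop c) =
      insert 0 ((ASCset c).map (addRightEmbedding 1)) := by
    ext y
    simp only [mem_filter, mem_range, mem_insert, mem_map, ASCset, addRightEmbedding_apply,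
      IsAscTop]
    constructor
    · rintro ⟨hy, rfl | hasc⟩
      · exact Or.inl rfl
      · rcases Nat.eq_zero_or_pos y with rfl | hpos
        · exact Or.inl rfl
        · exact Or.inr ⟨y - 1, ⟨by omega, by rwa [Nat.sub_add_cancel hpos]⟩, by omega⟩
    · rintro (rfl | ⟨j, ⟨hj, hasc⟩, rfl⟩)
      · exact ⟨List.length_pos_iff.2 hc, Or.inl rfl⟩
      · exact ⟨by omega, Or.inr hasc⟩
  rw [rank, hset, card_insert_of_notMem (by simp), card_map, ascN, ASCset]

end Rank

lemma isC_iff {c : List ℕ} : IsC c ↔ IsInvSeq c ∧ ∀ x ∈ c, IsAscTop c x := by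
  refine and_congr_right fun hinv => ⟨fun hc x hx => ?_, fun htop k hk hle m hkm hm hcm => ?_⟩
  · obtain ⟨m, hm, rfl⟩ := List.mem_iff_getElem.1 hx
    rw [← List.getD_eq_getElem _ 0 hm] at hx ⊢
    have hxm := hinv m hm
    refine or_iff_not_imp_left.2 fun hx0 => lt_of_not_ge fun hle => ?_
    exact hc (c.getD m 0 - 1) (by omega) (by rwa [Nat.sub_add_cancel (by omega)]) m (by omega) hm
      (by omega)
  · rcases htop (k + 1) (hcm ▸ List.getD_mem_of_lt hm) with h | h
    · omega
    · rw [Nat.add_sub_cancel] at h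
      omega

def Admissible (p : List ℕ) (y : ℕ) : Prop := y ≤ p.length ∧ (y = p.length ∨ IsAscTop p y)

lemma isAscTop_append_singleton_self_iff {p : List ℕ} {y : ℕ} (hp : IsInvSeq p)
    (hy : y ≤ p.length) : IsAscTop (p ++ [y]) y ↔ y = p.length ∨ IsAscTop p y := by
  rcases hy.lt_or_eq with hy | rfl
  · rw [isAscTop_append_iff hy]
    exact (or_iff_right hy.ne).symm
  · refine iff_of_true (or_iff_not_imp_left.2 fun h0 => ?_) (Or.inl rfl)
    have := hp (p.length - 1) (by omega)
    rw [List.getD_append _ _ _ _ (by omega), List.getD_append_right _ _ _ _ le_rfl, Nat.sub_self]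
    simp only [List.getD_cons_zero]
    omega

lemma isC_append_singleton_iff {p : List ℕ} {y : ℕ} :
    IsC (p ++ [y]) ↔ IsC p ∧ Admissible p y := by
  rw [isC_iff, isC_iff, isInvSeq_append_singleton_iff, List.forall_mem_append,
    List.forall_mem_singleton, Admissible]
  constructor
  · rintro ⟨⟨hp, hy⟩, hmem, htop⟩
    exact ⟨⟨hp, fun x hx => (isAscTop_append_iff (hp.lt_length_of_mem hx)).1 (hmem x hx)⟩, hy,
      (isAscTop_append_singleton_self_iff hp hy).1 htop⟩
  · rintro ⟨⟨hp, hmem⟩, hy, htop⟩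
    exact ⟨⟨hp, hy⟩, fun x hx => (isAscTop_append_iff (hp.lt_length_of_mem hx)).2 (hmem x hx),
      (isAscTop_append_singleton_self_iff hp hy).2 htop⟩

lemma _root_.IsC.strictMonoOn_rank {c : List ℕ} (hc : IsC c) :
    StrictMonoOn (rank c) {x | x ∈ c} :=
  fun _ hx _ _ hxy => rank_lt_rank ((isC_iff.1 hc).2 _ hx) hxy

lemma strictMonoOn_rank_admissible (p : List ℕ) : StrictMonoOn (rank p) {y | Admissible p y} := by
  rintro y ⟨-, hy⟩ z ⟨hz, -⟩ hyz
  exact rank_lt_rank (hy.resolve_left (by omega)) hyz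

lemma exists_admissible_rank_eq (p : List ℕ) {x : ℕ} (hx : x ≤ rank p p.length) :
    ∃ y, Admissible p y ∧ rank p y = x := by
  suffices ∀ i, x ≤ rank p i → ∃ y ≤ i, (y = i ∨ IsAscTop p y) ∧ rank p y = x by
    obtain ⟨y, hy, htop, hrank⟩ := this _ hx
    exact ⟨y, ⟨hy, htop⟩, hrank⟩
  intro i
  induction i with
  | zero => exact fun hx => ⟨0, le_rfl, Or.inl rfl, (Nat.le_zero.1 hx).symm⟩
  | succ i ih =>
    intro hx
    rcases hx.eq_or_lt with rfl | hlt
    · exact ⟨i + 1, le_rfl, Or.inl rfl, rfl⟩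
    · rw [rank_succ] at hlt
      obtain ⟨y, hyi, htop, hrank⟩ := ih (by split_ifs at hlt <;> omega)
      refine ⟨y, hyi.trans (Nat.le_succ i), Or.inr ?_, hrank⟩
      rcases htop with rfl | htop
      · by_contra hnot
        rw [if_neg hnot] at hlt
        omega
      · exact htop

lemma length_gamma (c : List ℕ) : (gamma c).length = c.length := List.length_map _

lemma gamma_append_singleton {p : List ℕ} {y : ℕ} (hp : IsInvSeq p) (hy : y ≤ p.length) :
    gamma (p ++ [y]) = gamma p ++ [rank p y] := by
  rw [gamma, List.map_append, List.map_singleton, rank_append hy, gamma]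
  congr 1
  exact List.map_congr_left fun x hx => rank_append (hp.lt_length_of_mem hx).le

lemma _root_.IsC.ascN_gamma {c : List ℕ} (hc : IsC c) : ascN (gamma c) = ascN c :=
  ascN_map hc.strictMonoOn_rank

lemma rank_le_ascN_add_one {p : List ℕ} {y : ℕ} (hy : y ≤ p.length) :
    rank p y ≤ ascN p + 1 := by
  rcases eq_or_ne p [] with rfl | hp
  · exact ((rank_le_self y).trans hy).trans (Nat.zero_le _)
  · exact (rank_mono hy).trans (rank_length hp).le

lemma _root_.IsC.isAscSeq_gamma {c : List ℕ} (hc : IsC c) : IsAscSeq (gamma c) := by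
  induction c using List.reverseRecOn with
  | nil => simp [gamma, IsAscSeq, IsInvSeq]
  | append_singleton p y ih =>
    obtain ⟨hp, hy, -⟩ := isC_append_singleton_iff.1 hc
    rw [gamma_append_singleton hp.1 hy, isAscSeq_append_singleton_iff, length_gamma,
      hp.ascN_gamma]
    exact ⟨ih hp, (rank_le_self y).trans hy, rank_le_ascN_add_one hy⟩

lemma injOn_gamma : Set.InjOn gamma {c | IsC c} := by
  intro c hc c' hc' h
  induction c using List.reverseRecOn generalizing c' with
  | nil => exact (List.map_eq_nil_iff.1 h.symm).symm
  | append_singleton p y ih =>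
    obtain ⟨hp, hy⟩ := isC_append_singleton_iff.1 hc
    rcases c'.eq_nil_or_concat' with rfl | ⟨p', y', rfl⟩
    · exact absurd h (by simp [gamma])
    obtain ⟨hp', hy'⟩ := isC_append_singleton_iff.1 hc'
    rw [gamma_append_singleton hp.1 hy.1, gamma_append_singleton hp'.1 hy'.1] at h
    obtain ⟨hpre, hlast⟩ := List.append_inj' h rfl
    obtain rfl := ih hp hp' hpre
    rw [(strictMonoOn_rank_admissible p).injOn hy hy' (List.singleton_inj.1 hlast)]

lemma exists_isC_gamma_eq {a : List ℕ} (ha : IsAscSeq a) : ∃ c, IsC c ∧ gamma c = a := by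
  induction a using List.reverseRecOn with
  | nil => exact ⟨[], by simp [IsC, IsInvSeq], rfl⟩
  | append_singleton b x ih =>
    obtain ⟨hb, hxlen, hxasc⟩ := isAscSeq_append_singleton_iff.1 ha
    obtain ⟨p, hp, rfl⟩ := ih hb
    rw [length_gamma] at hxlen
    rw [hp.ascN_gamma] at hxasc
    have hx : x ≤ rank p p.length := by
      rcases eq_or_ne p [] with rfl | hne
      · exact hxlen
      · rwa [rank_length hne]
    obtain ⟨y, hy, rfl⟩ := exists_admissible_rank_eq p hx
    exact ⟨p ++ [y], isC_append_singleton_iff.2 ⟨hp, hy⟩, gamma_append_singleton hp.1 hy.1⟩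

end InvSeq

open InvSeq in
/-- There is a bijection `γ : C_n → A_n` preserving the set-valued statistics
`ASC`, `DIST`, `ZERO` and `RMIN`; in particular `|C_n| = |A_n|`. -/
theorem gamma_bijection (n : ℕ) :
    (∃ γ : List ℕ → List ℕ,
      Set.BijOn γ {c | IsC c ∧ c.length = n} (AscSeqs n) ∧
      ∀ c, IsC c → c.length = n →
        ASCset (γ c) = ASCset c ∧ DISTset (γ c) = DISTset c ∧
        ZEROset (γ c) = ZEROset c ∧ RMINset (γ c) = RMINset c) ∧
    {c : List ℕ | IsC c ∧ c.length = n}.ncard = (AscSeqs n).ncard := by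
  have hbij : Set.BijOn gamma {c | IsC c ∧ c.length = n} (AscSeqs n) := by
    refine ⟨fun c ⟨hc, hn⟩ => ⟨hc.isAscSeq_gamma, (length_gamma _).trans hn⟩,
      injOn_gamma.mono fun c hc => hc.1, fun a ⟨ha, hn⟩ => ?_⟩
    obtain ⟨c, hc, rfl⟩ := exists_isC_gamma_eq ha
    exact ⟨c, ⟨hc, (length_gamma _).symm.trans hn⟩, rfl⟩
  refine ⟨⟨gamma, hbij, fun c hc _ => ?_⟩, hbij.ncard_eq⟩
  have hzero : ∀ x ∈ c, rank c x = 0 ↔ x = 0 := fun _ _ => rank_eq_zero_iff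
  exact ⟨ASCset_map hc.strictMonoOn_rank, DISTset_map hc.strictMonoOn_rank hzero,
    ZEROset_map hzero, RMINset_map hc.strictMonoOn_rank⟩
end
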